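/- Assume that ω ↦ log‖A₁(ω)‖ is integrable with E[log‖A₁‖] < 0, and that E[log⁺‖B₁‖] < ∞; let U := Σ_{k=0}^{∞} (A₁ ⋯ A_k) B_{k+1} (the almost surely convergent backward series). Let Y₀ be any random vector in ℝ^q independent of the whole sequence ((A_k, B_k))_{k≥1}, and define Y_m := A_m Y_{m−1} + B_m for m ≥ 1. Then the distribution of Y_m converges weakly to the distribution of U as m → ∞. -/

import Mathlib

/-!
Write `Tₖ y = Aₖ y + Bₖ`. The forward iterate `Yₘ = Tₘ ∘ ⋯ ∘ T₁ (Y₀)` has the same law as the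
backward iterate `Zₘ = T₁ ∘ ⋯ ∘ Tₘ (Y₀) = ∑_{k<m} A₁⋯Aₖ Bₖ₊₁ + A₁⋯Aₘ Y₀`: the pairs are i.i.d. and
independent of `Y₀`, so reversing the first `m` of them does not change the joint law. Unlike
`Yₘ`, the backward iterate converges almost surely: by the strong law of large numbers
`‖A₁⋯Aₙ‖ ≤ exp (∑_{i≤n} log ‖Aᵢ‖)` decays exponentially while `log⁺ ‖Bₙ‖ = o(n)`, so the
backward series converges geometrically and `A₁⋯Aₘ Y₀ → 0`. Dominated convergence finishes.
-/

open MeasureTheory ProbabilityTheory Filter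
open scoped NNReal Topology BoundedContinuousFunction

/-- The ordered composition `A s ω ∘ A (s+1) ω ∘ ⋯ ∘ A (s+k-1) ω` of random continuous linear
maps on Euclidean space (the identity when `k = 0`). -/
noncomputable def fwdProd {Ω : Type*} {q : ℕ}
    (A : ℕ → Ω → (EuclideanSpace ℝ (Fin q) →L[ℝ] EuclideanSpace ℝ (Fin q)))
    (s k : ℕ) (ω : Ω) : EuclideanSpace ℝ (Fin q) →L[ℝ] EuclideanSpace ℝ (Fin q) :=
  ((List.range k).map (fun i => A (s + i) ω)).prod

open Finset Real

section AffineComp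

variable {𝕜 E : Type*} [NontriviallyNormedField 𝕜] [NormedAddCommGroup E] [NormedSpace 𝕜 E]

/-- `affineComp m v y = T (v 0) (T (v 1) (⋯ (T (v (m - 1)) y)))`, where `T (a, b) y = a y + b`. -/
def affineComp : (m : ℕ) → (Fin m → (E →L[𝕜] E) × E) → E → E
  | 0, _, y => y
  | m + 1, v, y => affineComp m (Fin.init v) ((v (Fin.last m)).1 y + (v (Fin.last m)).2)

theorem affineComp_succ' (m : ℕ) (v : Fin (m + 1) → (E →L[𝕜] E) × E) (y : E) :
    affineComp (m + 1) v y = (v 0).1 (affineComp m (Fin.tail v) y) + (v 0).2 := by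
  induction m generalizing y with
  | zero => rfl
  | succ m ih => rw [affineComp, ih, Fin.tail_init_eq_init_tail]; rfl

theorem eq_affineComp_rev {y : ℕ → E} {x : ℕ → (E →L[𝕜] E) × E}
    (hy : ∀ m, y (m + 1) = (x m).1 (y m) + (x m).2) (m : ℕ) :
    y m = affineComp m (fun i => x i.rev) (y 0) := by
  induction m with
  | zero => rfl
  | succ m ih =>
    have htail : Fin.tail (fun i : Fin (m + 1) => x i.rev) = fun i => x i.rev := by
      funext i
      simp only [Fin.tail, Fin.rev_succ, Fin.val_castSucc]
    rw [affineComp_succ', htail, hy, ih]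
    simp

theorem continuous_affineComp (m : ℕ) :
    Continuous fun p : E × (Fin m → (E →L[𝕜] E) × E) => affineComp m p.2 p.1 := by
  induction m with
  | zero => exact continuous_fst
  | succ m ih =>
    refine ih.comp (f := fun p : E × (Fin (m + 1) → (E →L[𝕜] E) × E) =>
      ((p.2 (Fin.last m)).1 p.1 + (p.2 (Fin.last m)).2, Fin.init p.2)) ?_
    fun_prop

end AffineComp

theorem eventually_le_mul_of_tendsto_div {s : ℕ → ℝ} {a c : ℝ}
    (h : Tendsto (fun n => s n / n) atTop (𝓝 a)) (hac : a < c) :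
    ∀ᶠ n : ℕ in atTop, s n ≤ n * c := by
  filter_upwards [(tendsto_order.1 h).2 c hac, eventually_gt_atTop 0] with n hlt hn
  exact ((div_lt_iff₀' (by positivity)).1 hlt).le

theorem tendsto_div_of_tendsto_sum_range_div {x : ℕ → ℝ} {a : ℝ}
    (h : Tendsto (fun n => (∑ i ∈ range n, x i) / n) atTop (𝓝 a)) :
    Tendsto (fun n => x n / n) atTop (𝓝 0) := by
  have hratio : Tendsto (fun n : ℕ => 1 + 1 / (n : ℝ)) atTop (𝓝 1) := by
    simpa using tendsto_const_nhds.add (tendsto_one_div_atTop_nhds_zero_nat (𝕜 := ℝ))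
  have hlim := ((h.comp (tendsto_add_atTop_nat 1)).mul hratio).sub h
  rw [mul_one, sub_self] at hlim
  refine hlim.congr' ?_
  -- `xₙ / n = Sₙ₊₁ / (n + 1) * (1 + 1 / n) - Sₙ / n` for the partial sums `Sₙ`
  filter_upwards [eventually_gt_atTop 0] with n hn
  simp only [Function.comp_apply, sum_range_succ, Nat.cast_add_one]
  field_simp
  ring

theorem tendsto_sum_range_apply_add_apply {𝕜 E F : Type*} [NontriviallyNormedField 𝕜]
    [NormedAddCommGroup E] [NormedSpace 𝕜 E] [NormedAddCommGroup F] [NormedSpace 𝕜 F]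
    [CompleteSpace F] {P : ℕ → E →L[𝕜] F} {b : ℕ → E} {c d : ℝ} (hc : c < 0) (hcd : c + d < 0)
    (hP : ∀ᶠ n : ℕ in atTop, ‖P n‖ ≤ exp (n * c)) (hb : ∀ᶠ n : ℕ in atTop, ‖b n‖ ≤ exp (n * d))
    (y : E) :
    Tendsto (fun m => ∑ k ∈ range m, P k (b k) + P m y) atTop (𝓝 (∑' k, P k (b k))) := by
  have hsummable : Summable fun k => P k (b k) := by
    refine .of_norm_bounded_eventually
      (summable_geometric_of_lt_one (exp_nonneg _) (exp_lt_one_iff.2 hcd)) ?_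
    rw [Nat.cofinite_eq_atTop]
    filter_upwards [hP, hb] with n hPn hbn
    calc ‖P n (b n)‖ ≤ ‖P n‖ * ‖b n‖ := (P n).le_opNorm (b n)
      _ ≤ exp (n * c) * exp (n * d) := by gcongr
      _ = exp (c + d) ^ n := by rw [← exp_add, ← exp_nat_mul, mul_add]
  have hremainder : Tendsto (fun m => P m y) atTop (𝓝 0) := by
    refine squeeze_zero_norm' ?_ (by simpa using (tendsto_pow_atTop_nhds_zero_of_lt_one
      (exp_nonneg c) (exp_lt_one_iff.2 hc)).mul_const ‖y‖)
    filter_upwards [hP] with n hPn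
    calc ‖P n y‖ ≤ ‖P n‖ * ‖y‖ := (P n).le_opNorm y
      _ ≤ exp c ^ n * ‖y‖ := by rw [← exp_nat_mul]; gcongr
  simpa using hsummable.hasSum.tendsto_sum_nat.add hremainder

section fwdProd

variable {Ω : Type*} {q : ℕ}
  (A : ℕ → Ω → (EuclideanSpace ℝ (Fin q) →L[ℝ] EuclideanSpace ℝ (Fin q)))

theorem fwdProd_succ (s k : ℕ) (ω : Ω) :
    fwdProd A s (k + 1) ω = fwdProd A s k ω * A (s + k) ω := by
  simp [fwdProd, List.range_succ]

theorem norm_fwdProd_le_exp_sum (s n : ℕ) (ω : Ω) :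
    ‖fwdProd A s n ω‖ ≤ exp (∑ i ∈ range n, log ‖A (s + i) ω‖) := by
  induction n with
  | zero => simpa [fwdProd, ContinuousLinearMap.one_def] using ContinuousLinearMap.norm_id_le
  | succ n ih =>
    calc ‖fwdProd A s (n + 1) ω‖ ≤ ‖fwdProd A s n ω‖ * ‖A (s + n) ω‖ := by
          rw [fwdProd_succ]; exact norm_mul_le _ _
      _ ≤ exp (∑ i ∈ range n, log ‖A (s + i) ω‖) * exp (log ‖A (s + n) ω‖) := by
          gcongr
          exact le_exp_log _
      _ = exp (∑ i ∈ range (n + 1), log ‖A (s + i) ω‖) := by rw [sum_range_succ, exp_add]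

theorem affineComp_eq_sum_fwdProd (B : ℕ → Ω → EuclideanSpace ℝ (Fin q)) (m : ℕ) (ω : Ω)
    (y : EuclideanSpace ℝ (Fin q)) :
    affineComp m (fun i => (A (i + 1) ω, B (i + 1) ω)) y =
      ∑ k ∈ range m, fwdProd A 1 k ω (B (k + 1) ω) + fwdProd A 1 m ω y := by
  induction m generalizing y with
  | zero => simp [affineComp, fwdProd]
  | succ m ih =>
    rw [affineComp, Fin.init_def]
    simp only [Fin.val_castSucc, Fin.val_last, ih, sum_range_succ, fwdProd_succ,
      mul_apply_eq_comp, map_add, add_comm 1 m]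
    abel

theorem tendsto_affineComp_of_log_averages (B : ℕ → Ω → EuclideanSpace ℝ (Fin q)) (ω : Ω)
    {a b : ℝ} (ha : a < 0)
    (hA : Tendsto (fun n : ℕ => (∑ i ∈ range n, log ‖A (i + 1) ω‖) / n) atTop (𝓝 a))
    (hB : Tendsto (fun n : ℕ => (∑ i ∈ range n, log (max 1 ‖B (i + 1) ω‖)) / n) atTop (𝓝 b))
    (y : EuclideanSpace ℝ (Fin q)) :
    Tendsto (fun m => affineComp m (fun i => (A (i + 1) ω, B (i + 1) ω)) y) atTop
      (𝓝 (∑' k, fwdProd A 1 k ω (B (k + 1) ω))) := by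
  simp_rw [affineComp_eq_sum_fwdProd]
  refine tendsto_sum_range_apply_add_apply (c := a / 2) (d := -a / 4) (by linarith)
    (by linarith) ?_ ?_ y
  · filter_upwards [eventually_le_mul_of_tendsto_div hA (by linarith : a < a / 2)] with n hn
    refine (norm_fwdProd_le_exp_sum A 1 n ω).trans (exp_le_exp.2 ?_)
    simpa only [add_comm 1] using hn
  · filter_upwards [eventually_le_mul_of_tendsto_div (tendsto_div_of_tendsto_sum_range_div hB)
      (by linarith : 0 < -a / 4)] with n hn
    calc ‖B (n + 1) ω‖ ≤ max 1 ‖B (n + 1) ω‖ := le_max_right _ _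
      _ = exp (log (max 1 ‖B (n + 1) ω‖)) := (exp_log (by positivity)).symm
      _ ≤ exp (n * (-a / 4)) := exp_le_exp.2 hn

end fwdProd

section Probability

variable {Ω α : Type*} [MeasurableSpace Ω] [MeasurableSpace α] {μ : Measure Ω}

theorem strong_law_ae_comp {X : ℕ → Ω → α} (hind : iIndepFun X μ)
    (hident : ∀ i, IdentDistrib (X i) (X 0) μ μ) {φ : α → ℝ} (hφ : Measurable φ)
    (hint : Integrable (φ ∘ X 0) μ) :
    ∀ᵐ ω ∂μ, Tendsto (fun n : ℕ => (∑ i ∈ range n, φ (X i ω)) / n) atTop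
      (𝓝 (∫ ω, φ (X 0 ω) ∂μ)) :=
  strong_law_ae_real (fun i => φ ∘ X i) hint (fun _ _ hij => (hind.indepFun hij).comp hφ hφ)
    fun i => (hident i).comp hφ

variable {ι κ β : Type*} [MeasurableSpace β] [Fintype κ] [IsProbabilityMeasure μ]
  {X : ι → Ω → α} {Y : Ω → β}

theorem map_prodMk_comp_eq_prod_pi (hX : ∀ i, AEMeasurable (X i) μ) (hY : AEMeasurable Y μ)
    (hXind : iIndepFun X μ) (hYind : IndepFun Y (fun ω i => X i ω) μ) {σ : κ → ι}
    (hσ : σ.Injective) :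
    μ.map (fun ω => (Y ω, fun k => X (σ k) ω)) =
      (μ.map Y).prod (Measure.pi fun k => μ.map (X (σ k))) := by
  have hYσ : IndepFun Y (fun ω k => X (σ k) ω) μ :=
    hYind.comp measurable_id (measurable_pi_lambda _ fun k => measurable_pi_apply (σ k))
  rw [(indepFun_iff_map_prod_eq_prod_map_map hY
      (aemeasurable_pi_lambda _ fun k => hX (σ k))).1 hYσ,
    (iIndepFun_iff_map_fun_eq_pi_map fun k => hX (σ k)).1 (hXind.precomp hσ)]

theorem identDistrib_prodMk_comp (hX : ∀ i, AEMeasurable (X i) μ) (hY : AEMeasurable Y μ)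
    (hXind : iIndepFun X μ) (hYind : IndepFun Y (fun ω i => X i ω) μ) {σ τ : κ → ι}
    (hσ : σ.Injective) (hτ : τ.Injective) (hστ : ∀ k, IdentDistrib (X (σ k)) (X (τ k)) μ μ) :
    IdentDistrib (fun ω => (Y ω, fun k => X (σ k) ω)) (fun ω => (Y ω, fun k => X (τ k) ω))
      μ μ where
  aemeasurable_fst := hY.prodMk (aemeasurable_pi_lambda _ fun k => hX (σ k))
  aemeasurable_snd := hY.prodMk (aemeasurable_pi_lambda _ fun k => hX (τ k))
  map_eq := by
    simp_rw [map_prodMk_comp_eq_prod_pi hX hY hXind hYind hσ,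
      map_prodMk_comp_eq_prod_pi hX hY hXind hYind hτ, (hστ _).map_eq]

end Probability

theorem tendsto_integral_comp_of_ae_tendsto {Ω E ι : Type*} [MeasurableSpace Ω]
    [TopologicalSpace E] [MeasurableSpace E] [OpensMeasurableSpace E] {μ : Measure Ω}
    [IsFiniteMeasure μ] {l : Filter ι} [l.IsCountablyGenerated] (f : E →ᵇ ℝ) {Z : ι → Ω → E}
    {U : Ω → E} (hZ : ∀ i, AEMeasurable (Z i) μ)
    (hlim : ∀ᵐ ω ∂μ, Tendsto (fun i => Z i ω) l (𝓝 (U ω))) :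
    Tendsto (fun i => ∫ ω, f (Z i ω) ∂μ) l (𝓝 (∫ ω, f (U ω) ∂μ)) :=
  tendsto_integral_filter_of_dominated_convergence (fun _ => ‖f‖)
    (.of_forall fun i => (f.continuous.measurable.comp_aemeasurable (hZ i)).aestronglyMeasurable)
    (.of_forall fun _ => .of_forall fun _ => f.norm_coe_le_norm _) (integrable_const _)
    (hlim.mono fun _ h => (f.continuous.tendsto _).comp h)

theorem affine_recurrence_tendsto_in_distribution_general
    {Ω : Type*} [MeasureSpace Ω] [IsProbabilityMeasure (ℙ : Measure Ω)]
    {q : ℕ}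
    [MeasurableSpace (EuclideanSpace ℝ (Fin q) →L[ℝ] EuclideanSpace ℝ (Fin q))]
    [BorelSpace (EuclideanSpace ℝ (Fin q) →L[ℝ] EuclideanSpace ℝ (Fin q))]
    (A : ℕ → Ω → (EuclideanSpace ℝ (Fin q) →L[ℝ] EuclideanSpace ℝ (Fin q)))
    (B : ℕ → Ω → EuclideanSpace ℝ (Fin q))
    (hAmeas : ∀ k : ℕ, Measurable (A (k + 1)))
    (hBmeas : ∀ k : ℕ, Measurable (B (k + 1)))
    (hiid : iIndepFun
      (fun (k : ℕ) ω => (A (k + 1) ω, B (k + 1) ω)) ℙ)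
    (hident : ∀ k : ℕ, IdentDistrib (fun ω => (A (k + 1) ω, B (k + 1) ω))
      (fun ω => (A 1 ω, B 1 ω)) ℙ ℙ)
    (hlogA_int : Integrable (fun ω => Real.log ‖A 1 ω‖) ℙ)
    (hlogA_neg : ∫ ω, Real.log ‖A 1 ω‖ ∂ℙ < 0)
    (hlogB_int : Integrable (fun ω => Real.log (max 1 ‖B 1 ω‖)) ℙ)
    (Y₀ : Ω → EuclideanSpace ℝ (Fin q)) (hY₀meas : Measurable Y₀)
    (hY₀indep : IndepFun Y₀ (fun ω (k : ℕ) => (A (k + 1) ω, B (k + 1) ω)) ℙ)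
    (Y : ℕ → Ω → EuclideanSpace ℝ (Fin q)) (hY0 : Y 0 = Y₀)
    (hYrec : ∀ m : ℕ, Y (m + 1) = fun ω => A (m + 1) ω (Y m ω) + B (m + 1) ω) :
    ∀ f : EuclideanSpace ℝ (Fin q) →ᵇ ℝ,
      Tendsto (fun m => ∫ ω, f (Y m ω) ∂ℙ) atTop
        (𝓝 (∫ ω, f (∑' k : ℕ, (fwdProd A 1 k ω) (B (k + 1) ω)) ∂ℙ)) := by
  intro f
  set X := fun (k : ℕ) ω => (A (k + 1) ω, B (k + 1) ω)
  set Z := fun m ω => affineComp m (fun i : Fin m => X i ω) (Y₀ ω)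
  have hX : ∀ k, AEMeasurable (X k) := fun k => ((hAmeas k).prodMk (hBmeas k)).aemeasurable
  have hXident : ∀ k, IdentDistrib (X k) (X 0) ℙ ℙ := fun k => (hident k).trans (hident 0).symm
  have hYZ : ∀ m, IdentDistrib (Y m) (Z m) ℙ ℙ := by
    intro m
    have hY : Y m = fun ω => affineComp m (fun i : Fin m => X i.rev ω) (Y₀ ω) := by
      funext ω
      rw [← hY0]
      exact eq_affineComp_rev (y := (Y · ω)) (x := (X · ω)) (fun n => congrFun (hYrec n) ω) m
    rw [hY]
    exact (identDistrib_prodMk_comp hX hY₀meas.aemeasurable hiid hY₀indep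
      (Fin.val_injective.comp Fin.rev_injective) Fin.val_injective
      fun _ => (hXident _).trans (hXident _).symm).comp (continuous_affineComp m).measurable
  have hZ : ∀ᵐ ω, Tendsto (fun m => Z m ω) atTop
      (𝓝 (∑' k : ℕ, (fwdProd A 1 k ω) (B (k + 1) ω))) := by
    filter_upwards [strong_law_ae_comp hiid hXident (φ := fun p => log ‖p.1‖) (by fun_prop)
        hlogA_int,
      strong_law_ae_comp hiid hXident (φ := fun p => log (max 1 ‖p.2‖)) (by fun_prop)
        hlogB_int] with ω hA hB
    exact tendsto_affineComp_of_log_averages A B ω hlogA_neg hA hB (Y₀ ω)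
  exact (tendsto_integral_comp_of_ae_tendsto f (fun m => (hYZ m).aemeasurable_snd) hZ).congr
    fun m => ((hYZ m).comp f.continuous.measurable).integral_eq.symm

/-- Convergence in distribution of the random recurrence `Y_m = A_m Y_{m-1} + B_m` to the
backward series `U = Σ_{k≥0} (A₁ ⋯ A_k) B_{k+1}`, for an i.i.d. sequence `((A_k, B_k))_{k≥1}`
with `E[log ‖A₁‖] < 0` and `E[log⁺ ‖B₁‖] < ∞`, started from any `Y₀` independent of the
sequence.  Convergence in distribution is expressed by testing against all bounded continuous
functions. -/
theorem affine_recurrence_tendsto_in_distribution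
    {Ω : Type*} [MeasureSpace Ω] [IsProbabilityMeasure (ℙ : Measure Ω)]
    {q : ℕ} (hq : 1 ≤ q)
    [MeasurableSpace (EuclideanSpace ℝ (Fin q) →L[ℝ] EuclideanSpace ℝ (Fin q))]
    [BorelSpace (EuclideanSpace ℝ (Fin q) →L[ℝ] EuclideanSpace ℝ (Fin q))]
    (A : ℕ → Ω → (EuclideanSpace ℝ (Fin q) →L[ℝ] EuclideanSpace ℝ (Fin q)))
    (B : ℕ → Ω → EuclideanSpace ℝ (Fin q))
    (hAmeas : ∀ k : ℕ, Measurable (A (k + 1)))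
    (hBmeas : ∀ k : ℕ, Measurable (B (k + 1)))
    (hiid : iIndepFun
      (fun (k : ℕ) ω => (A (k + 1) ω, B (k + 1) ω)) ℙ)
    (hident : ∀ k : ℕ, IdentDistrib (fun ω => (A (k + 1) ω, B (k + 1) ω))
      (fun ω => (A 1 ω, B 1 ω)) ℙ ℙ)
    (hlogA_int : Integrable (fun ω => Real.log ‖A 1 ω‖) ℙ)
    (hlogA_neg : ∫ ω, Real.log ‖A 1 ω‖ ∂ℙ < 0)
    (hlogB_int : Integrable (fun ω => Real.log (max 1 ‖B 1 ω‖)) ℙ)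
    (Y₀ : Ω → EuclideanSpace ℝ (Fin q)) (hY₀meas : Measurable Y₀)
    (hY₀indep : IndepFun Y₀ (fun ω (k : ℕ) => (A (k + 1) ω, B (k + 1) ω)) ℙ)
    (Y : ℕ → Ω → EuclideanSpace ℝ (Fin q)) (hY0 : Y 0 = Y₀)
    (hYrec : ∀ m : ℕ, Y (m + 1) = fun ω => A (m + 1) ω (Y m ω) + B (m + 1) ω) :
    ∀ f : EuclideanSpace ℝ (Fin q) →ᵇ ℝ,
      Tendsto (fun m => ∫ ω, f (Y m ω) ∂ℙ) atTop
        (𝓝 (∫ ω, f (∑' k : ℕ, (fwdProd A 1 k ω) (B (k + 1) ω)) ∂ℙ)) :=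
  affine_recurrence_tendsto_in_distribution_general A B hAmeas hBmeas hiid hident hlogA_int
    hlogA_neg hlogB_int Y₀ hY₀meas hY₀indep Y hY0 hYrec
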